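/- Let u be an extended odometer on the integer interval [0,n] (a function u: ℤ → ℤ vanishing outside [0,n]), with instruction lists and initial configuration σ fixed, and define f_v = R_u(v) − L_u(v+1) (net flow from v to v+1) and s_v = Σ_{i=1}^v 1{instr_i(u(i)) = sleep}. Then u is stable on [1, n−1] if and only if f_v = f₀ + Σ_{i=1}^v |σ(i)| − s_v for all v ∈ [0, n−1]. -/

import Mathlib

/-- ARW instructions. -/
inductive Instr : Type
  | left
  | right
  | sleep
deriving DecidableEq

/-- Signed count of `left` instructions executed at site `v` by the extended
odometer `u`: for `u v ≥ 0` the number of `left`s among instructions `1,…,u v`,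
and for `u v < 0` the negative of the number of `left`s among instructions
`u v + 1,…,0`. -/
noncomputable def Lcount (instr : ℤ → ℤ → Instr) (u : ℤ → ℤ) (v : ℤ) : ℤ :=
  if 0 ≤ u v then
    (((Finset.Icc 1 (u v)).filter fun i => instr v i = Instr.left).card : ℤ)
  else
    -((((Finset.Icc (u v + 1) 0).filter fun i => instr v i = Instr.left).card : ℤ))

/-- Signed count of `right` instructions executed at site `v` by `u`. -/
noncomputable def Rcount (instr : ℤ → ℤ → Instr) (u : ℤ → ℤ) (v : ℤ) : ℤ :=
  if 0 ≤ u v then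
    (((Finset.Icc 1 (u v)).filter fun i => instr v i = Instr.right).card : ℤ)
  else
    -((((Finset.Icc (u v + 1) 0).filter fun i => instr v i = Instr.right).card : ℤ))

/-- The number of particles left at `v` by the extended odometer `u`, for the
initial (all-active) configuration `σ`. -/
noncomputable def height (instr : ℤ → ℤ → Instr) (σ : ℤ → ℕ) (u : ℤ → ℤ) (v : ℤ) : ℤ :=
  (σ v : ℤ) + Rcount instr u (v - 1) + Lcount instr u (v + 1)
    - Lcount instr u v - Rcount instr u v

/-- Stability of the extended odometer `u` at site `v`. -/
def StableAt (instr : ℤ → ℤ → Instr) (σ : ℤ → ℕ) (u : ℤ → ℤ) (v : ℤ) : Prop :=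
  (height instr σ u v = 0 ∨ height instr σ u v = 1) ∧
    (height instr σ u v = 1 ↔ instr v (u v) = Instr.sleep)

/-!
The height at `v` is `|σ(v)|` plus the flow into `v` from the left minus the flow out of `v`
to the right, i.e. `h(v) = |σ(v)| + f(v-1) - f(v)`, and stability at `v` says exactly that
`h(v)` is the indicator of a sleep instruction. So stability on `[1, n-1]` is the recursion
`f(v) = f(v-1) + |σ(v)| - 1{sleep at v}`, which telescopes to the closed form.
-/

namespace Finset

theorem sum_Icc_eq_sum_Icc_sub_one_add {M : Type*} [AddCommMonoid M] (d : ℤ → M)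
    {a v : ℤ} (hv : a ≤ v) :
    ∑ i ∈ Icc a v, d i = ∑ i ∈ Icc a (v - 1), d i + d v := by
  rw [← insert_Icc_sub_one_right_eq_Icc hv, sum_insert (by simp), add_comm]

end Finset

open Finset

theorem forall_eq_add_iff_forall_eq_sum {M : Type*} [AddCommGroup M] (g d : ℤ → M) (m : ℤ) :
    (∀ v ∈ Icc 1 m, g v = g (v - 1) + d v) ↔
      ∀ v ∈ Icc 0 m, g v = g 0 + ∑ i ∈ Icc 1 v, d i := by
  simp only [mem_Icc]
  constructor
  · intro hstep v ⟨hv0, hvm⟩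
    induction v, hv0 using Int.leInduction with
    | base => simp
    | succ w hw ih =>
      rw [hstep (w + 1) ⟨by omega, hvm⟩, add_sub_cancel_right, ih (by omega),
        sum_Icc_eq_sum_Icc_sub_one_add d (by omega : 1 ≤ w + 1), add_sub_cancel_right,
        add_assoc]
  · intro hsum v ⟨hv1, hvm⟩
    rw [hsum v ⟨by omega, hvm⟩, hsum (v - 1) ⟨by omega, by omega⟩,
      sum_Icc_eq_sum_Icc_sub_one_add d hv1, add_assoc]

section Odometer

variable (instr : ℤ → ℤ → Instr) (σ : ℤ → ℕ) (u : ℤ → ℤ)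

theorem stableAt_iff_height_eq_ite (v : ℤ) :
    StableAt instr σ u v ↔
      height instr σ u v = if instr v (u v) = Instr.sleep then 1 else 0 := by
  unfold StableAt
  split_ifs with hsleep <;> constructor
  · exact fun h => h.2.mpr hsleep
  · exact fun h => ⟨Or.inr h, iff_of_true h hsleep⟩
  · exact fun h => h.1.resolve_right (fun h1 => hsleep (h.2.mp h1))
  · intro h
    exact ⟨Or.inl h, iff_of_false (by omega) hsleep⟩

theorem height_eq_add_sub (v : ℤ) :
    height instr σ u v = (σ v : ℤ)
      + (Rcount instr u (v - 1) - Lcount instr u (v - 1 + 1))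
      - (Rcount instr u v - Lcount instr u (v + 1)) := by
  rw [sub_add_cancel, height]
  ring

end Odometer

theorem odometer_stable_iff_flow_general (instr : ℤ → ℤ → Instr)
    (σ : ℤ → ℕ) (n : ℤ) (u : ℤ → ℤ)
    (f : ℤ → ℤ) (hf : ∀ v, f v = Rcount instr u v - Lcount instr u (v + 1))
    (s : ℤ → ℤ)
    (hs : ∀ v, s v =
      (((Finset.Icc (1 : ℤ) v).filter fun i => instr i (u i) = Instr.sleep).card : ℤ)) :
    (∀ v ∈ Finset.Icc (1 : ℤ) (n - 1), StableAt instr σ u v) ↔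
      (∀ v ∈ Finset.Icc (0 : ℤ) (n - 1),
        f v = f 0 + (∑ i ∈ Finset.Icc (1 : ℤ) v, (σ i : ℤ)) - s v) := by
  set sleep : ℤ → ℤ := fun i => if instr i (u i) = Instr.sleep then 1 else 0
  have hs_sum : ∀ v, s v = ∑ i ∈ Icc 1 v, sleep i := fun v => by
    rw [hs, sum_boole]
  have hstable : ∀ v, StableAt instr σ u v ↔ f v = f (v - 1) + ((σ v : ℤ) - sleep v) :=
    fun v => by
      rw [stableAt_iff_height_eq_ite, height_eq_add_sub, ← hf, ← hf]
      constructor <;> intro h <;> linarith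
  simp only [hstable, forall_eq_add_iff_forall_eq_sum f (fun v => (σ v : ℤ) - sleep v),
    hs_sum, sum_sub_distrib, add_sub_assoc]

/-- Lemma 3.2 (`lem:flow`): an extended odometer `u` on `[0,n]` is stable on
`[1,n-1]` iff the net flows satisfy
`f v = f 0 + ∑_{i=1}^v |σ i| − s v` for all `v ∈ [0,n-1]`, where
`f v = R_u(v) − L_u(v+1)` and `s v = #{1 ≤ i ≤ v : instr_i(u i) = sleep}`. -/
theorem odometer_stable_iff_flow (instr : ℤ → ℤ → Instr)
    (hinstr0 : ∀ v, instr v 0 = Instr.left)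
    (σ : ℤ → ℕ) (n : ℤ) (u : ℤ → ℤ)
    (hsupp : ∀ v : ℤ, v ∉ Finset.Icc (0 : ℤ) n → u v = 0)
    (f : ℤ → ℤ) (hf : ∀ v, f v = Rcount instr u v - Lcount instr u (v + 1))
    (s : ℤ → ℤ)
    (hs : ∀ v, s v =
      (((Finset.Icc (1 : ℤ) v).filter fun i => instr i (u i) = Instr.sleep).card : ℤ)) :
    (∀ v ∈ Finset.Icc (1 : ℤ) (n - 1), StableAt instr σ u v) ↔
      (∀ v ∈ Finset.Icc (0 : ℤ) (n - 1),
        f v = f 0 + (∑ i ∈ Finset.Icc (1 : ℤ) v, (σ i : ℤ)) - s v) :=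
  odometer_stable_iff_flow_general instr σ n u f hf s hs
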